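/- Let ν > 1, η > 0 and β > 0, and set c := ∑_{n ∈ ℤ} (1+n²)^{−ν/2}. For r > 0 let N(r) := Nat.card {j ∈ ℕ | c·exp(−exp(η·j^β)/2) > r}. Then N(r) is finite for each small r > 0 and N(r) = η^{−1/β}·(log(−log r))^{1/β}·(1 + o(1)) as r → 0⁺; equivalently, lim_{r → 0⁺} N(r)/(η^{−1/β}·(log(−log r))^{1/β}) = 1. -/

import Mathlib

/-!
The constant `c` enters only through `c > 0` (the series converges and its `n = 0` term
is 1). Solving `c·exp(−exp(η t^β)/2) > r` for `t ≥ 0` shows that the counting set is the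
initial segment `{j | j < x(r)}` with `x(r) = (log(2 log(c/r))/η)^{1/β}`, so
`N(r) = ⌈x(r)⌉`. As `r → 0⁺`, `log(2(log c − log r)) ~ log(−log r)` and `⌈x⌉ ~ x`,
which gives the asymptotics.
-/

open Filter Real Set Asymptotics Topology

theorem summable_one_add_sq_rpow_neg {ν : ℝ} (hν : 1 < ν) :
    Summable fun n : ℤ => (1 + (n : ℝ) ^ 2) ^ (-(ν / 2)) := by
  refine Summable.of_norm_bounded_eventually (summable_abs_int_rpow hν) ?_
  filter_upwards [eventually_cofinite_ne 0] with n hn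
  have hn2 : 0 < (n : ℝ) ^ 2 := by
    have : (n : ℝ) ≠ 0 := Int.cast_ne_zero.mpr hn
    positivity
  rw [Real.norm_of_nonneg (by positivity)]
  calc (1 + (n : ℝ) ^ 2) ^ (-(ν / 2))
      ≤ ((n : ℝ) ^ 2) ^ (-(ν / 2)) := rpow_le_rpow_of_nonpos hn2 (by linarith) (by linarith)
    _ = |(n : ℝ)| ^ (-ν) := by
      rw [← sq_abs, ← rpow_natCast, ← rpow_mul (abs_nonneg _)]
      ring_nf

theorem tendsto_natCeil_div_of_tendsto_div {α : Type*} {l : Filter α} {f g : α → ℝ}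
    (hf : Tendsto f l atTop) (hfg : Tendsto (fun x => f x / g x) l (𝓝 1)) :
    Tendsto (fun x => (⌈f x⌉₊ : ℝ) / g x) l (𝓝 1) := by
  have h := (tendsto_nat_ceil_div_atTop.comp hf).mul hfg
  rw [mul_one] at h
  refine h.congr' ?_
  filter_upwards [hf.eventually_ne_atTop 0] with x hx
  simp only [Function.comp_apply, div_mul_div_cancel₀ hx]

theorem tendsto_log_two_mul_add_div_log (a : ℝ) :
    Tendsto (fun s => log (2 * (a + s)) / log s) atTop (𝓝 1) := by
  have hid : Tendsto (norm ∘ fun s : ℝ => s) atTop atTop := tendsto_norm_atTop_atTop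
  have hlog : Tendsto (norm ∘ log) atTop atTop :=
    tendsto_norm_atTop_atTop.comp tendsto_log_atTop
  have h : (fun s => log 2 + log (a + s)) ~[atTop] log :=
    ((IsEquivalent.refl.const_add_of_norm_tendsto_atTop hid).log tendsto_id
      ).const_add_of_norm_tendsto_atTop hlog
  refine (isEquivalent_iff_tendsto_one (tendsto_log_atTop.eventually_ne_atTop 0)).mp
    (h.congr_left ?_)
  filter_upwards [eventually_gt_atTop (-a)] with s hs
  rw [log_mul two_ne_zero (by linarith)]

theorem tendsto_neg_log_nhdsGT_zero : Tendsto (fun r => -log r) (𝓝[>] 0) atTop :=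
  tendsto_neg_atBot_atTop.comp tendsto_log_nhdsGT_zero

noncomputable def cutoff (c η β r : ℝ) : ℝ := (log (2 * (log c - log r)) / η) ^ (1 / β)

theorem lt_mul_exp_neg_exp_iff_lt_cutoff {c η β r t : ℝ} (hc : 0 < c) (hr : 0 < r) (hη : 0 < η)
    (hβ : 0 < β) (hcr : 1 ≤ 2 * (log c - log r)) (ht : 0 ≤ t) :
    r < c * exp (-exp (η * t ^ β) / 2) ↔ t < cutoff c η β r := by
  have hM : 0 ≤ log (2 * (log c - log r)) / η := div_nonneg (log_nonneg hcr) hη.le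
  rw [cutoff, one_div, lt_rpow_inv_iff_of_pos ht hM hβ, lt_div_iff₀' hη,
    lt_log_iff_exp_lt (by linarith), ← log_lt_log_iff hr (by positivity),
    log_mul hc.ne' (exp_pos _).ne', log_exp]
  constructor <;> intro h <;> linarith

theorem eventually_setOf_lt_mul_exp_neg_exp_eq_Iio {c η β : ℝ} (hc : 0 < c) (hη : 0 < η)
    (hβ : 0 < β) :
    ∀ᶠ r in 𝓝[>] (0 : ℝ),
      {j : ℕ | c * exp (-exp (η * (j : ℝ) ^ β) / 2) > r} = Iio ⌈cutoff c η β r⌉₊ := by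
  filter_upwards [self_mem_nhdsWithin,
    tendsto_neg_log_nhdsGT_zero.eventually_ge_atTop (1 / 2 - log c)] with r hr hcr
  ext j
  simp only [mem_ofPred_eq, mem_Iio, gt_iff_lt, Nat.lt_ceil]
  exact lt_mul_exp_neg_exp_iff_lt_cutoff hc hr hη hβ (by linarith) j.cast_nonneg

theorem tendsto_cutoff_atTop (c : ℝ) {η β : ℝ} (hη : 0 < η) (hβ : 0 < β) :
    Tendsto (cutoff c η β) (𝓝[>] 0) atTop := by
  have h : Tendsto (fun r => 2 * (log c - log r)) (𝓝[>] 0) atTop := by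
    simpa only [sub_eq_add_neg] using
      (tendsto_atTop_add_const_left _ (log c) tendsto_neg_log_nhdsGT_zero).const_mul_atTop
        two_pos
  exact (tendsto_rpow_atTop (by positivity)).comp
    ((tendsto_log_atTop.comp h).atTop_div_const hη)

theorem tendsto_cutoff_div_rpow_log_neg_log (c : ℝ) {η β : ℝ} (hη : 0 < η) :
    Tendsto (fun r => cutoff c η β r / (η ^ (-(1 / β)) * log (-log r) ^ (1 / β)))
      (𝓝[>] 0) (𝓝 1) := by
  have h := ((tendsto_log_two_mul_add_div_log (log c)).comp
    tendsto_neg_log_nhdsGT_zero).rpow_const (p := 1 / β) (Or.inl one_ne_zero)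
  rw [one_rpow] at h
  refine h.congr' ?_
  filter_upwards [tendsto_neg_log_nhdsGT_zero.eventually_gt_atTop 1,
    tendsto_neg_log_nhdsGT_zero.eventually_ge_atTop (1 / 2 - log c)] with r hs1 hs2
  have hlog : 0 < log (-log r) := log_pos hs1
  have hnum : 0 ≤ log (2 * (log c - log r)) := log_nonneg (by linarith)
  simp only [Function.comp_apply, cutoff, ← sub_eq_add_neg]
  rw [div_rpow hnum hlog.le, div_rpow hnum hη.le, rpow_neg hη.le]
  have : η ^ (1 / β) ≠ 0 := (rpow_pos_of_pos hη _).ne'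
  have : log (-log r) ^ (1 / β) ≠ 0 := (rpow_pos_of_pos hlog _).ne'
  field_simp

/-- Eigenvalue counting asymptotics for super-exponentially decaying weights
`c·exp(−exp(η·j^β)/2)`: `N(r) = η^{−1/β}·(log(−log r))^{1/β}·(1+o(1))` as `r → 0⁺`. -/
theorem stmt_13 (ν η β : ℝ) (hν : 1 < ν) (hη : 0 < η) (hβ : 0 < β) :
    (∀ᶠ r : ℝ in nhdsWithin 0 (Set.Ioi 0),
      {j : ℕ | (∑' n : ℤ, (1 + (n : ℝ) ^ 2) ^ (-(ν / 2))) *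
        Real.exp (-Real.exp (η * (j : ℝ) ^ β) / 2) > r}.Finite) ∧
    Tendsto
      (fun r : ℝ =>
        (Nat.card {j : ℕ | (∑' n : ℤ, (1 + (n : ℝ) ^ 2) ^ (-(ν / 2))) *
            Real.exp (-Real.exp (η * (j : ℝ) ^ β) / 2) > r} : ℝ) /
          (η ^ (-(1 / β)) * Real.log (-Real.log r) ^ (1 / β)))
      (nhdsWithin 0 (Set.Ioi 0)) (nhds 1) := by
  set c : ℝ := ∑' n : ℤ, (1 + (n : ℝ) ^ 2) ^ (-(ν / 2))
  have hc : 0 < c :=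
    (summable_one_add_sq_rpow_neg hν).tsum_pos (fun _ => by positivity) 0 (by simp)
  have hset := eventually_setOf_lt_mul_exp_neg_exp_eq_Iio hc hη hβ
  refine ⟨hset.mono fun r h => h ▸ finite_Iio _, ?_⟩
  refine (tendsto_natCeil_div_of_tendsto_div (tendsto_cutoff_atTop c hη hβ)
    (tendsto_cutoff_div_rpow_log_neg_log c hη)).congr' ?_
  filter_upwards [hset] with r h
  rw [h, Nat.card_coe_set_eq, ncard_Iio_nat]
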